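/- arXiv:math/0401127 — 3 statements merged into one kernel-verified Lean document; each statement's English description precedes it below -/
import Mathlib

section
/- The map s ↦ s^{-1} is a measurable bijection of the cone P_m of positive definite symmetric m×m matrices onto itself, and the Lebesgue measure transforms as dr = |det s|^{-(m+1)} ds under r = s^{-1}; i.e., for integrable f, ∫_{P_m} f(s^{-1}) |det s|^{-(m+1)} ds = ∫_{P_m} f(r) dr. -/
open MeasureTheory Matrix

attribute [local instance] Classical.propDecidable

noncomputable instance matMeasureSpace {α β : Type*} [Fintype α] [Fintype β] :
    MeasureSpace (Matrix α β ℝ) :=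
  inferInstanceAs (MeasureSpace (α → β → ℝ))

/-- Coordinates `(r_{ij})_{i ≤ j}` on the space of symmetric `m × m` matrices,
carrying the Lebesgue measure `∏_{i ≤ j} dr_{ij}`. -/
abbrev SymCoord (m : ℕ) := {p : Fin m × Fin m // p.1 ≤ p.2} → ℝ

/-- The symmetric matrix determined by its upper-triangular coordinates. -/
def symOf {m : ℕ} (u : SymCoord m) : Matrix (Fin m) (Fin m) ℝ :=
  Matrix.of fun i j => if h : i ≤ j then u ⟨(i, j), h⟩ else u ⟨(j, i), (le_total i j).resolve_left h⟩

/-- The Siegel gamma function `Γ_m(α) = π^{m(m-1)/4} ∏_{j=0}^{m-1} Γ(α - j/2)`. -/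
noncomputable def SiegelGammaC (m : ℕ) (α : ℂ) : ℂ :=
  (Real.pi : ℂ) ^ (((m * (m - 1) : ℕ) : ℂ) / 4) *
    ∏ j ∈ Finset.range m, Complex.Gamma (α - (j : ℂ) / 2)

/-!
Inversion is an involution of the cone, so the only content is its Jacobian. The derivative
of `s ↦ s⁻¹` at `s` is `X ↦ -s⁻¹ X s⁻¹`, i.e. minus the congruence `X ↦ A X Aᵀ` by `A = s⁻¹`,
acting on the `m(m+1)/2` coordinates of a symmetric matrix. The congruence is multiplicative
in `A`, and for diagonal `A = diag(d)` it scales the coordinate `(i, j)` by `dᵢ dⱼ`, so its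
determinant is `∏_{i ≤ j} dᵢ dⱼ = (∏ dᵢ)^(m+1)`. Diagonalising `s⁻¹` orthogonally gives the
Jacobian `|det s|^{-(m+1)}`, and the change of variables formula does the rest.
-/

open Finset in
theorem prod_pairs_le_mul_eq_prod_pow {M : Type*} [CommMonoid M] {m : ℕ} (d : Fin m → M) :
    ∏ p : {p : Fin m × Fin m // p.1 ≤ p.2}, d p.1.1 * d p.1.2 = (∏ i, d i) ^ (m + 1) := by
  have hcount (i : Fin m) : #(Ici i) + #(Iic i) = m + 1 := by
    rw [Fin.card_Ici, Fin.card_Iic]; omega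
  rw [← prod_subtype {p : Fin m × Fin m | p.1 ≤ p.2} (by simp) (fun p => d p.1 * d p.2),
    prod_mul_distrib, prod_filter, prod_filter, Fintype.prod_prod_type, Fintype.prod_prod_type,
    prod_comm (s := univ) (t := univ) (f := fun i j => if i ≤ j then d j else 1), ← prod_pow,
    ← prod_mul_distrib]
  simp only [prod_ite, prod_const_one, mul_one, prod_const, filter_le_eq_Ici, filter_ge_eq_Iic,
    ← pow_add, hcount]

section Matrix

variable {n : Type*} [Fintype n]

theorem Matrix.IsSymm.mul_mul_transpose {α : Type*} [CommSemiring α] {S : Matrix n n α}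
    (hS : S.IsSymm) (A : Matrix n n α) : (A * S * Aᵀ).IsSymm := by
  simp [IsSymm, transpose_mul, hS.eq, Matrix.mul_assoc]

theorem isClosed_setOf_posSemidef : IsClosed {M : Matrix n n ℝ | M.PosSemidef} := by
  simp_rw [posSemidef_iff_dotProduct_mulVec, Set.ofPred_and, Set.ofPred_forall]
  exact (isClosed_eq continuous_id.matrix_conjTranspose continuous_id).inter <|
    isClosed_iInter fun x => isClosed_le continuous_const <|
      continuous_const.dotProduct (continuous_id.matrix_mulVec continuous_const)

variable [DecidableEq n]

theorem measurable_matrix_inv : Measurable fun s : Matrix n n ℝ => s⁻¹ := by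
  have : BorelSpace (Matrix n n ℝ) := inferInstanceAs (BorelSpace (n → n → ℝ))
  simp_rw [inv_def, Ring.inverse_eq_inv']
  exact continuous_id.matrix_det.measurable.inv.smul continuous_id.matrix_adjugate.measurable

theorem bijOn_inv_setOf_posDef :
    Set.BijOn (fun s : Matrix n n ℝ => s⁻¹) {r | r.PosDef} {r | r.PosDef} := by
  have hmaps : Set.MapsTo (fun s : Matrix n n ℝ => s⁻¹) {r | r.PosDef} {r | r.PosDef} :=
    fun _ hr => hr.inv
  have hinv : Set.LeftInvOn (fun s : Matrix n n ℝ => s⁻¹) (fun s => s⁻¹) {r | r.PosDef} :=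
    fun r hr => nonsing_inv_nonsing_inv r ((isUnit_iff_isUnit_det r).mp hr.isUnit)
  exact Set.InvOn.bijOn ⟨hinv, hinv⟩ hmaps hmaps

-- `HasFDerivAt` only sees the topology; the operator norm just makes matrices a complete normed
-- algebra, where the derivative of `Ring.inverse` is known.
open scoped Matrix.Norms.Operator in
theorem hasFDerivAt_matrix_inv {s : Matrix n n ℝ} (hs : IsUnit s) :
    HasFDerivAt (fun X : Matrix n n ℝ => X⁻¹)
      (-ContinuousLinearMap.mulLeftRight ℝ (Matrix n n ℝ) s⁻¹ s⁻¹) s := by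
  obtain ⟨u, rfl⟩ := hs
  rw [show (fun X : Matrix n n ℝ => X⁻¹) = Ring.inverse from funext nonsing_inv_eq_ringInverse,
    ← coe_units_inv]
  exact hasFDerivAt_ringInverse u

theorem setOf_posDef_eq_posSemidef_inter :
    {M : Matrix n n ℝ | M.PosDef} = {M | M.PosSemidef} ∩ {M | M.det ≠ 0} := by
  ext M
  exact ⟨fun h => ⟨h.posSemidef, h.det_pos.ne'⟩, fun h => h.1.posDef_iff_det_ne_zero.mpr h.2⟩

end Matrix

section Coordinates

variable {m : ℕ}

def toSymCoord (M : Matrix (Fin m) (Fin m) ℝ) : SymCoord m := fun p => M p.1.1 p.1.2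

theorem symOf_apply_of_le (u : SymCoord m) {i j : Fin m} (h : i ≤ j) :
    symOf u i j = u ⟨(i, j), h⟩ :=
  dif_pos h

theorem symOf_isSymm (u : SymCoord m) : (symOf u).IsSymm := by
  ext i j
  rcases lt_trichotomy i j with h | rfl | h
  · simp [symOf, h.le, h.not_ge]
  · rfl
  · simp [symOf, h.le, h.not_ge]

theorem toSymCoord_symOf (u : SymCoord m) : toSymCoord (symOf u) = u :=
  funext fun p => symOf_apply_of_le u p.2

theorem symOf_toSymCoord {M : Matrix (Fin m) (Fin m) ℝ} (hM : M.IsSymm) :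
    symOf (toSymCoord M) = M := by
  ext i j
  by_cases h : i ≤ j
  · exact symOf_apply_of_le _ h
  · simp only [symOf, toSymCoord, of_apply, dif_neg h]
    exact hM.apply i j

def symOfLinear : SymCoord m →ₗ[ℝ] Matrix (Fin m) (Fin m) ℝ where
  toFun := symOf
  map_add' u v := by ext i j; by_cases h : i ≤ j <;> simp [symOf, h]
  map_smul' c u := by ext i j; by_cases h : i ≤ j <;> simp [symOf, h]

def toSymCoordLinear : Matrix (Fin m) (Fin m) ℝ →ₗ[ℝ] SymCoord m where
  toFun := toSymCoord
  map_add' _ _ := rfl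
  map_smul' _ _ := rfl

theorem continuous_symOf : Continuous (symOf : SymCoord m → Matrix (Fin m) (Fin m) ℝ) :=
  symOfLinear.continuous_of_finiteDimensional

end Coordinates

section Congruence

variable {m : ℕ}

def congruenceCoords (A : Matrix (Fin m) (Fin m) ℝ) : SymCoord m →ₗ[ℝ] SymCoord m :=
  toSymCoordLinear ∘ₗ LinearMap.mulRight ℝ Aᵀ ∘ₗ LinearMap.mulLeft ℝ A ∘ₗ symOfLinear

theorem congruenceCoords_apply (A : Matrix (Fin m) (Fin m) ℝ) (u : SymCoord m) :
    congruenceCoords A u = toSymCoord (A * symOf u * Aᵀ) :=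
  rfl

theorem congruenceCoords_mul (A B : Matrix (Fin m) (Fin m) ℝ) :
    congruenceCoords (A * B) = congruenceCoords A ∘ₗ congruenceCoords B := by
  refine LinearMap.ext fun u => ?_
  rw [LinearMap.comp_apply, congruenceCoords_apply, congruenceCoords_apply,
    congruenceCoords_apply, symOf_toSymCoord ((symOf_isSymm u).mul_mul_transpose B), transpose_mul]
  simp only [Matrix.mul_assoc]

theorem congruenceCoords_one :
    congruenceCoords (1 : Matrix (Fin m) (Fin m) ℝ) = LinearMap.id := by
  refine LinearMap.ext fun u => ?_
  simp [congruenceCoords_apply, toSymCoord_symOf]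

theorem congruenceCoords_diagonal (d : Fin m → ℝ) :
    congruenceCoords (diagonal d) = toLin' (diagonal fun p : {p : Fin m × Fin m // p.1 ≤ p.2} =>
      d p.1.1 * d p.1.2) := by
  refine LinearMap.ext fun u => funext fun p => ?_
  rw [congruenceCoords_apply, toLin'_apply, mulVec_diagonal, diagonal_transpose]
  simp only [toSymCoord, mul_diagonal, diagonal_mul, symOf_apply_of_le u p.2]
  ring

theorem det_congruenceCoords_diagonal (d : Fin m → ℝ) :
    LinearMap.det (congruenceCoords (diagonal d)) = (∏ i, d i) ^ (m + 1) := by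
  rw [congruenceCoords_diagonal, LinearMap.det_toLin', det_diagonal,
    prod_pairs_le_mul_eq_prod_pow]

theorem det_congruenceCoords_of_isHermitian {S : Matrix (Fin m) (Fin m) ℝ} (hS : S.IsHermitian) :
    LinearMap.det (congruenceCoords S) = S.det ^ (m + 1) := by
  set U : Matrix (Fin m) (Fin m) ℝ := ↑hS.eigenvectorUnitary
  have hU : LinearMap.det (congruenceCoords U) * LinearMap.det (congruenceCoords (star U)) = 1 := by
    rw [← LinearMap.det_comp, ← congruenceCoords_mul, Unitary.mul_star_self_of_mem
      hS.eigenvectorUnitary.2, congruenceCoords_one, LinearMap.det_id]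
  calc LinearMap.det (congruenceCoords S)
      = LinearMap.det (congruenceCoords U) *
          LinearMap.det (congruenceCoords (diagonal hS.eigenvalues)) *
          LinearMap.det (congruenceCoords (star U)) := by
        conv_lhs => rw [hS.spectral_theorem]
        simp [U, congruenceCoords_mul, LinearMap.det_comp]
    _ = S.det ^ (m + 1) := by
        rw [mul_right_comm, hU, one_mul, det_congruenceCoords_diagonal, hS.det_eq_prod_eigenvalues]
        simp

end Congruence

theorem abs_det_neg_congruenceCoords_inv {m : ℕ} {S : Matrix (Fin m) (Fin m) ℝ}
    (hS : S.IsHermitian) :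
    |LinearMap.det (-congruenceCoords S⁻¹)| = (|S.det| ^ (m + 1))⁻¹ := by
  rw [← neg_one_smul ℝ (congruenceCoords S⁻¹), LinearMap.det_smul, abs_mul, abs_pow, abs_neg,
    abs_one, one_pow, one_mul, det_congruenceCoords_of_isHermitian hS.inv, det_nonsing_inv,
    Ring.inverse_eq_inv', abs_pow, abs_inv, inv_pow]

section Cone

variable {m : ℕ}

def posDefCone (m : ℕ) : Set (SymCoord m) := {u | (symOf u).PosDef}

noncomputable def invCoords (u : SymCoord m) : SymCoord m := toSymCoord (symOf u)⁻¹

theorem symOf_invCoords (u : SymCoord m) : symOf (invCoords u) = (symOf u)⁻¹ :=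
  symOf_toSymCoord (symOf_isSymm u).inv

theorem measurableSet_posDefCone : MeasurableSet (posDefCone m) := by
  change MeasurableSet (symOf ⁻¹' {M | M.PosDef})
  rw [setOf_posDef_eq_posSemidef_inter, Set.preimage_inter]
  exact (isClosed_setOf_posSemidef.preimage continuous_symOf).measurableSet.inter
    (isOpen_ne_fun continuous_symOf.matrix_det continuous_const).measurableSet

theorem bijOn_invCoords : Set.BijOn invCoords (posDefCone m) (posDefCone m) := by
  have hmaps : Set.MapsTo invCoords (posDefCone m) (posDefCone m) := fun u hu => by
    change (symOf (invCoords u)).PosDef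
    rw [symOf_invCoords]
    exact hu.inv
  have hinv : Set.LeftInvOn invCoords invCoords (posDefCone m) := fun u hu => by
    rw [invCoords, symOf_invCoords, nonsing_inv_nonsing_inv _ hu.det_pos.ne'.isUnit,
      toSymCoord_symOf]
  exact Set.InvOn.bijOn ⟨hinv, hinv⟩ hmaps hmaps

open scoped Matrix.Norms.Operator in
theorem hasFDerivAt_invCoords {u : SymCoord m} (hu : IsUnit (symOf u)) :
    HasFDerivAt invCoords (-congruenceCoords (symOf u)⁻¹).toContinuousLinearMap u := by
  have h := toSymCoordLinear.toContinuousLinearMap.hasFDerivAt.comp u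
    ((hasFDerivAt_matrix_inv hu).comp u symOfLinear.toContinuousLinearMap.hasFDerivAt)
  refine h.congr_fderiv (ContinuousLinearMap.ext fun v => ?_)
  simp only [LinearMap.coe_toContinuousLinearMap', _root_.neg_apply, congruenceCoords_apply,
    (symOf_isSymm u).inv.eq, map_neg]
  rfl

theorem setIntegral_posDefCone_inv (f : Matrix (Fin m) (Fin m) ℝ → ℝ) :
    ∫ u in posDefCone m, f (symOf u)⁻¹ * (|(symOf u).det| ^ (m + 1))⁻¹ =
      ∫ u in posDefCone m, f (symOf u) := by
  have hderiv (u) (hu : u ∈ posDefCone m) : HasFDerivWithinAt invCoords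
      (-congruenceCoords (symOf u)⁻¹).toContinuousLinearMap (posDefCone m) u :=
    (hasFDerivAt_invCoords hu.isUnit).hasFDerivWithinAt
  conv_rhs => rw [← bijOn_invCoords.image_eq]
  rw [integral_image_eq_integral_abs_det_fderiv_smul volume measurableSet_posDefCone hderiv
    bijOn_invCoords.injOn]
  refine setIntegral_congr_fun measurableSet_posDefCone fun u hu => ?_
  rw [ContinuousLinearMap.det, LinearMap.coe_toContinuousLinearMap,
    abs_det_neg_congruenceCoords_inv hu.isHermitian, symOf_invCoords, smul_eq_mul, mul_comm]

theorem integral_ite_posDef_eq_setIntegral (g : SymCoord m → ℝ) :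
    ∫ u, (if (symOf u).PosDef then g u else 0) = ∫ u in posDefCone m, g u := by
  rw [← integral_indicator measurableSet_posDefCone]
  rfl

end Cone

theorem integral_cone_inverse_general (m : ℕ) (f : Matrix (Fin m) (Fin m) ℝ → ℝ) :
    Measurable (fun s : Matrix (Fin m) (Fin m) ℝ => s⁻¹) ∧
    Set.BijOn (fun s : Matrix (Fin m) (Fin m) ℝ => s⁻¹)
      {r | r.PosDef} {r | r.PosDef} ∧
    (∫ u : SymCoord m,
        if (symOf u).PosDef then f ((symOf u)⁻¹) * (|(symOf u).det| ^ (m + 1))⁻¹ else 0) =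
      ∫ u : SymCoord m, if (symOf u).PosDef then f (symOf u) else 0 := by
  refine ⟨measurable_matrix_inv, bijOn_inv_setOf_posDef, ?_⟩
  rw [integral_ite_posDef_eq_setIntegral, integral_ite_posDef_eq_setIntegral,
    setIntegral_posDefCone_inv]

/-- `s ↦ s⁻¹` is a measurable bijection of the cone `P_m` of positive definite
symmetric matrices onto itself, and under `r = s⁻¹` the measure transforms as
`dr = |det s|^{-(m+1)} ds`: `∫_{P_m} f(s⁻¹) |det s|^{-(m+1)} ds = ∫_{P_m} f(r) dr`. -/
theorem integral_cone_inverse (m : ℕ) (f : Matrix (Fin m) (Fin m) ℝ → ℝ)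
    (hf : Integrable (fun u : SymCoord m => if (symOf u).PosDef then f (symOf u) else 0)) :
    Measurable (fun s : Matrix (Fin m) (Fin m) ℝ => s⁻¹) ∧
    Set.BijOn (fun s : Matrix (Fin m) (Fin m) ℝ => s⁻¹)
      {r | r.PosDef} {r | r.PosDef} ∧
    (∫ u : SymCoord m,
        if (symOf u).PosDef then f ((symOf u)⁻¹) * (|(symOf u).det| ^ (m + 1))⁻¹ else 0) =
      ∫ u : SymCoord m, if (symOf u).PosDef then f (symOf u) else 0 :=
  integral_cone_inverse_general m f
end

section
/- If f is a continuous function on M_{n,m} satisfying f(x) = O(‖x‖^{-a}) with a > km, where ‖x‖ = (tr(x'x))^{1/2}, then the matrix k-plane Radon transform f̂(ξ,t) = ∫_{M_{k,m}} f(g_ξ [u;t]) du is finite for all ξ ∈ V_{n,n-k} and all t ∈ M_{n-k,m}. -/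
/-! Since `g` is orthogonal, `tr((g [u;t])ᵀ (g [u;t])) = tr(uᵀu) + tr(tᵀt) ≥ tr(uᵀu)`, so the
decay hypothesis gives `|f (g [u;t])| ≤ C (1 + ‖u‖)^(-a)`, the sup norm of `u` being at most its
Frobenius norm. The right-hand side is integrable on the `km`-dimensional space `M_{k,m}`
exactly because `a > km`. -/

open MeasureTheory Matrix

/-- The distinguished frame `ξ₀ = [0; I_{n-k}] ∈ V_{n,n-k}`, with `n = k + l`
realized through the index type `Fin k ⊕ Fin l`. -/
def xi0 (k l : ℕ) : Matrix (Fin k ⊕ Fin l) (Fin l) ℝ := Matrix.fromRows 0 1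

namespace Matrix

variable {p q r : Type*}

theorem _root_.Continuous.matrix_fromRows {X R : Type*} [TopologicalSpace X] [TopologicalSpace R]
    {A : X → Matrix p q R} {B : X → Matrix r q R} (hA : Continuous A) (hB : Continuous B) :
    Continuous fun x ↦ fromRows (A x) (B x) := by
  refine continuous_pi fun i ↦ ?_
  cases i with
  | inl i => exact (continuous_apply i).comp hA
  | inr i => exact (continuous_apply i).comp hB

variable [Fintype p] [Fintype q]

theorem trace_transpose_mul_self (x : Matrix p q ℝ) : (xᵀ * x).trace = ∑ i, ∑ j, x i j ^ 2 := by
  simp only [trace, diag, mul_apply, transpose_apply, ← sq]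
  exact Finset.sum_comm

theorem trace_transpose_mul_self_nonneg (x : Matrix p q ℝ) : 0 ≤ (xᵀ * x).trace := by
  rw [trace_transpose_mul_self]; positivity

theorem trace_transpose_mul_self_orthogonal_mul [Fintype r] [DecidableEq p] {g : Matrix r p ℝ}
    (hg : gᵀ * g = 1) (x : Matrix p q ℝ) : ((g * x)ᵀ * (g * x)).trace = (xᵀ * x).trace := by
  rw [transpose_mul, Matrix.mul_assoc, ← Matrix.mul_assoc gᵀ, hg, Matrix.one_mul]

theorem trace_transpose_mul_self_fromRows [Fintype r] (u : Matrix p q ℝ) (t : Matrix r q ℝ) :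
    ((fromRows u t)ᵀ * fromRows u t).trace = (uᵀ * u).trace + (tᵀ * t).trace := by
  rw [transpose_fromRows, fromCols_mul_fromRows, trace_add]

theorem norm_le_sqrt_trace_transpose_mul_self (u : p → q → ℝ) :
    ‖u‖ ≤ √((of u)ᵀ * of u).trace := by
  refine (pi_norm_le_iff_of_nonneg (Real.sqrt_nonneg _)).2 fun i ↦
    (pi_norm_le_iff_of_nonneg (Real.sqrt_nonneg _)).2 fun j ↦ ?_
  rw [Real.norm_eq_abs, ← Real.sqrt_sq_eq_abs, trace_transpose_mul_self]
  refine Real.sqrt_le_sqrt ?_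
  calc u i j ^ 2 ≤ ∑ j', u i j' ^ 2 :=
        Finset.single_le_sum (fun _ _ ↦ sq_nonneg _) (Finset.mem_univ j)
    _ ≤ ∑ i', ∑ j', u i' j' ^ 2 :=
        Finset.single_le_sum (f := fun i' ↦ ∑ j', u i' j' ^ 2)
          (fun _ _ ↦ by positivity) (Finset.mem_univ i)

theorem integrable_of_abs_le_one_add_sqrt_trace_rpow {h : Matrix p q ℝ → ℝ}
    (hh : Continuous h) {C a : ℝ} (ha : (Fintype.card p * Fintype.card q : ℝ) < a)
    (hbound : ∀ u, |h u| ≤ C * (1 + √(uᵀ * u).trace) ^ (-a)) : Integrable h := by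
  have ha₀ : 0 < a := lt_of_le_of_lt (by positivity) ha
  have hdom : Integrable fun u : p → q → ℝ ↦ C * (1 + ‖u‖) ^ (-a) := by
    refine (integrable_one_add_norm ?_).const_mul C
    simpa [Module.finrank_pi_fintype, Module.finrank_pi] using ha
  show Integrable (fun u : p → q → ℝ ↦ h u)
  have hmeas : AEStronglyMeasurable fun u : p → q → ℝ ↦ h u :=
    (hh.comp (continuous_id : Continuous (of : (p → q → ℝ) ≃ Matrix p q ℝ))).aestronglyMeasurable
  refine hdom.mono' hmeas (Filter.Eventually.of_forall fun u ↦ ?_)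
  have hC : 0 ≤ C := nonneg_of_mul_nonneg_left ((abs_nonneg _).trans (hbound u)) (by positivity)
  calc ‖h u‖ ≤ C * (1 + √((of u)ᵀ * of u).trace) ^ (-a) := hbound u
    _ ≤ C * (1 + ‖u‖) ^ (-a) := by
      refine mul_le_mul_of_nonneg_left (Real.rpow_le_rpow_of_nonpos (by positivity) ?_ ?_) hC
      · grw [norm_le_sqrt_trace_transpose_mul_self u]
      · linarith

end Matrix

theorem radon_transform_continuous_general (k l m : ℕ)
    (f : Matrix (Fin k ⊕ Fin l) (Fin m) ℝ → ℝ) (hf : Continuous f)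
    (C a : ℝ) (ha : (k * m : ℝ) < a)
    (hbound : ∀ x, |f x| ≤ C * (1 + Real.sqrt (xᵀ * x).trace) ^ (-a)) :
    ∀ (ξ : Matrix (Fin k ⊕ Fin l) (Fin l) ℝ), ξᵀ * ξ = 1 →
    ∀ (g : Matrix (Fin k ⊕ Fin l) (Fin k ⊕ Fin l) ℝ),
      gᵀ * g = 1 → g.det = 1 → g * xi0 k l = ξ →
    ∀ t : Matrix (Fin l) (Fin m) ℝ,
      Integrable fun u : Matrix (Fin k) (Fin m) ℝ => f (g * Matrix.fromRows u t) := by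
  intro ξ _ g hg _ _ t
  have hC : 0 ≤ C :=
    nonneg_of_mul_nonneg_left ((abs_nonneg _).trans (hbound 0)) (by positivity)
  have ha₀ : 0 ≤ a := lt_of_le_of_lt (by positivity) ha |>.le
  refine integrable_of_abs_le_one_add_sqrt_trace_rpow (C := C)
    (hf.comp (continuous_const.matrix_mul (continuous_id.matrix_fromRows continuous_const)))
    (by simpa using ha) fun u ↦ (hbound _).trans ?_
  rw [trace_transpose_mul_self_orthogonal_mul hg, trace_transpose_mul_self_fromRows]
  refine mul_le_mul_of_nonneg_left (Real.rpow_le_rpow_of_nonpos (by positivity) ?_ ?_) hC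
  · grw [← trace_transpose_mul_self_nonneg t]; simp
  · linarith

/-- if `f` is continuous on `M_{n,m}` (`n = k + l`) with
`f(x) = O(‖x‖^{-a})`, `a > km`, where `‖x‖ = (tr x'x)^{1/2}` is the Frobenius norm, then
the matrix `k`-plane Radon transform `f̂(ξ,t) = ∫ f(g [u;t]) du` is finite for all
frames `ξ ∈ V_{n,n-k}` and all `t ∈ M_{n-k,m}`. -/
theorem radon_transform_continuous (k l m : ℕ) (hk : 0 < k) (hl : 0 < l)
    (f : Matrix (Fin k ⊕ Fin l) (Fin m) ℝ → ℝ) (hf : Continuous f)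
    (C a : ℝ) (ha : (k * m : ℝ) < a)
    (hbound : ∀ x, |f x| ≤ C * (1 + Real.sqrt (xᵀ * x).trace) ^ (-a)) :
    ∀ (ξ : Matrix (Fin k ⊕ Fin l) (Fin l) ℝ), ξᵀ * ξ = 1 →
    ∀ (g : Matrix (Fin k ⊕ Fin l) (Fin k ⊕ Fin l) ℝ),
      gᵀ * g = 1 → g.det = 1 → g * xi0 k l = ξ →
    ∀ t : Matrix (Fin l) (Fin m) ℝ,
      Integrable fun u : Matrix (Fin k) (Fin m) ℝ => f (g * Matrix.fromRows u t) :=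
  radon_transform_continuous_general k l m f hf C a ha hbound
end

section
/- Central Slice Theorem for matrix Radon transforms: let f ∈ L¹(M_{n,m}) with n-k ≥ m. If y ∈ M_{n,m}, ξ ∈ V_{n,n-k} is an orthonormal frame spanning an (n-k)-dimensional subspace containing the column span of y, and b ∈ M_{n-k,m} satisfies y = ξ b, then the Fourier transform (ℱf)(y) = ∫ exp(i tr(y'x)) f(x) dx equals ∫_{M_{n-k,m}} exp(i tr(b't)) f̂(ξ,t) dt; i.e., (ℱf)(ξb) = ℱ[f̂(ξ,·)](b). -/
open MeasureTheory Matrix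

/-!
Left multiplication by the rotation `g` has Jacobian `(det g)^m = ±1`, so it preserves Lebesgue
measure on `M_{n,m}`. After this substitution the phase becomes `tr((ξb)ᵀ g x) = tr(bᵀ ξ₀ᵀ x)`,
which only sees the last `n - k` rows `t` of `x = [u; t]`; Fubini over this splitting of the rows
then integrates out `u` first and leaves the Fourier transform of the Radon slice `f̂(ξ, ·)`.
-/

open scoped Kronecker

namespace Matrix

variable {n m p q : Type*} [Fintype n] [Fintype m] [Fintype p] [Fintype q]

theorem det_mulLeftLinearMap [DecidableEq n] [DecidableEq m] {R : Type*} [CommRing R]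
    (g : Matrix n n R) : LinearMap.det (mulLeftLinearMap m R g) = g.det ^ Fintype.card m := by
  have hmat : LinearMap.toMatrix (stdBasis R n m) (stdBasis R n m) (mulLeftLinearMap m R g) =
      g ⊗ₖ (1 : Matrix m m R) := by
    ext ⟨i, j⟩ ⟨i', j'⟩
    simp [LinearMap.toMatrix_apply, stdBasis, mul_apply, Pi.single_apply, one_apply,
      apply_ite (fun v : m → R => v j)]
  rw [← LinearMap.det_toMatrix (stdBasis R n m), hmat, det_kronecker, det_one, one_pow, mul_one]

theorem abs_det_eq_one_of_transpose_mul_self [DecidableEq n] {g : Matrix n n ℝ}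
    (hg : gᵀ * g = 1) : |g.det| = 1 := by
  have h := congrArg det hg
  rw [det_mul, det_transpose, det_one, ← sq, ← sq_abs] at h
  exact (pow_eq_one_iff_of_nonneg (abs_nonneg _) two_ne_zero).mp h

instance borelSpace_real : BorelSpace (Matrix n m ℝ) :=
  inferInstanceAs (BorelSpace (n → m → ℝ))

instance sigmaFinite_volume_real : SigmaFinite (volume : Measure (Matrix n m ℝ)) :=
  inferInstanceAs (SigmaFinite (volume : Measure (n → m → ℝ)))

theorem measurePreserving_mul_left [DecidableEq n] {g : Matrix n n ℝ} (hg : |g.det| = 1) :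
    MeasurePreserving (fun x : Matrix n m ℝ => g * x) := by
  classical
  let L : (n → m → ℝ) →ₗ[ℝ] (n → m → ℝ) := mulLeftLinearMap m ℝ g
  have hdet : |LinearMap.det L| = 1 := by
    rw [show LinearMap.det L = g.det ^ Fintype.card m from det_mulLeftLinearMap g, abs_pow, hg,
      one_pow]
  have hmap := Measure.map_linearMap_addHaar_eq_smul_addHaar (volume : Measure (n → m → ℝ))
    (f := L) (by rw [← abs_ne_zero, hdet]; exact one_ne_zero)
  rw [abs_inv, hdet, inv_one, ENNReal.ofReal_one, one_smul] at hmap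
  exact ⟨L.continuous_of_finiteDimensional.measurable, hmap⟩

theorem measurableEmbedding_mul_left [DecidableEq n] {g : Matrix n n ℝ} (hg : g.det ≠ 0) :
    MeasurableEmbedding (fun x : Matrix n m ℝ => g * x) := by
  classical
  let L : (n → m → ℝ) →ₗ[ℝ] (n → m → ℝ) := mulLeftLinearMap m ℝ g
  have hL : LinearMap.det L ≠ 0 := by
    rw [show LinearMap.det L = g.det ^ Fintype.card m from det_mulLeftLinearMap g]
    exact pow_ne_zero _ hg
  exact (L.equivOfDetNeZero hL).toContinuousLinearEquiv.toHomeomorph.measurableEmbedding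

theorem integral_comp_mul_left [DecidableEq n] {E : Type*} [NormedAddCommGroup E]
    [NormedSpace ℝ E] {g : Matrix n n ℝ} (hg : |g.det| = 1) (F : Matrix n m ℝ → E) :
    ∫ x : Matrix n m ℝ, F (g * x) = ∫ x, F x :=
  (measurePreserving_mul_left hg).integral_comp
    (measurableEmbedding_mul_left (abs_ne_zero.mp (hg ▸ one_ne_zero))) F

theorem integrable_comp_mul_left [DecidableEq n] {E : Type*} [NormedAddCommGroup E]
    {g : Matrix n n ℝ} (hg : |g.det| = 1) {F : Matrix n m ℝ → E} (hF : Integrable F) :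
    Integrable fun x : Matrix n m ℝ => F (g * x) :=
  (measurePreserving_mul_left hg).integrable_comp_of_integrable hF

theorem measurePreserving_fromRows :
    MeasurePreserving (fun z : Matrix p m ℝ × Matrix q m ℝ => fromRows z.1 z.2) :=
  volume_measurePreserving_sumPiEquivProdPi_symm (fun _ : p ⊕ q => m → ℝ)

theorem integral_eq_integral_integral_fromRows {E : Type*} [NormedAddCommGroup E]
    [NormedSpace ℝ E] {F : Matrix (p ⊕ q) m ℝ → E} (hF : Integrable F) :
    ∫ x, F x = ∫ t : Matrix q m ℝ, ∫ u : Matrix p m ℝ, F (fromRows u t) := by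
  let e : Matrix p m ℝ × Matrix q m ℝ ≃ᵐ Matrix (p ⊕ q) m ℝ :=
    (MeasurableEquiv.sumPiEquivProdPi (fun _ : p ⊕ q => m → ℝ)).symm
  have he : MeasurePreserving e := measurePreserving_fromRows
  rw [← he.integral_comp' F]
  exact integral_prod_symm _ (he.integrable_comp_of_integrable hF)

end Matrix

theorem MeasureTheory.Integrable.cexp_I_mul_mul {α : Type*} [MeasurableSpace α]
    {μ : Measure α} {f : α → ℂ} (hf : Integrable f μ) {φ : α → ℝ} (hφ : Measurable φ) :
    Integrable (fun x => Complex.exp (Complex.I * φ x) * f x) μ := by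
  refine hf.bdd_mul (c := 1) (by fun_prop) (ae_of_all _ fun x => ?_)
  rw [mul_comm, Complex.norm_exp_ofReal_mul_I]

theorem xi0_transpose_mul_fromRows {k l m : ℕ} (u : Matrix (Fin k) (Fin m) ℝ)
    (t : Matrix (Fin l) (Fin m) ℝ) : (xi0 k l)ᵀ * fromRows u t = t := by
  simp [xi0, transpose_fromRows, fromCols_mul_fromRows]

theorem central_slice_general (k l m : ℕ)
    (f : Matrix (Fin k ⊕ Fin l) (Fin m) ℝ → ℂ) (hf : Integrable f)
    (ξ : Matrix (Fin k ⊕ Fin l) (Fin l) ℝ)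
    (g : Matrix (Fin k ⊕ Fin l) (Fin k ⊕ Fin l) ℝ)
    (hg : gᵀ * g = 1) (hgξ : g * xi0 k l = ξ)
    (b : Matrix (Fin l) (Fin m) ℝ) (y : Matrix (Fin k ⊕ Fin l) (Fin m) ℝ)
    (hy : y = ξ * b) :
    (∫ x : Matrix (Fin k ⊕ Fin l) (Fin m) ℝ,
        Complex.exp (Complex.I * ((yᵀ * x).trace : ℂ)) * f x) =
      ∫ t : Matrix (Fin l) (Fin m) ℝ,
        Complex.exp (Complex.I * ((bᵀ * t).trace : ℂ)) *
          ∫ u : Matrix (Fin k) (Fin m) ℝ, f (g * Matrix.fromRows u t) := by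
  have hdet := abs_det_eq_one_of_transpose_mul_self hg
  have hphase : ∀ (u : Matrix (Fin k) (Fin m) ℝ) (t : Matrix (Fin l) (Fin m) ℝ),
      yᵀ * (g * fromRows u t) = bᵀ * t := fun u t => by
    rw [hy, ← hgξ, transpose_mul, transpose_mul, Matrix.mul_assoc, Matrix.mul_assoc,
      ← Matrix.mul_assoc gᵀ g, hg, Matrix.one_mul, xi0_transpose_mul_fromRows]
  have hint := hf.cexp_I_mul_mul
    (by fun_prop : Continuous fun x : Matrix (Fin k ⊕ Fin l) (Fin m) ℝ => (yᵀ * x).trace).measurable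
  rw [← integral_comp_mul_left hdet, integral_eq_integral_integral_fromRows
    (integrable_comp_mul_left hdet hint)]
  simp_rw [hphase, integral_const_mul]

/-- Central Slice Theorem: let `f ∈ L¹(M_{n,m})`, `n - k ≥ m`
(`n = k + l`, `m ≤ l`). If `ξ ∈ V_{n,n-k}` and `b ∈ M_{n-k,m}` satisfy `y = ξ b`, then
`(ℱf)(y) = ∫_{M_{n-k,m}} exp(i tr(b't)) f̂(ξ,t) dt`, where
`(ℱf)(y) = ∫ exp(i tr(y'x)) f(x) dx` and `f̂(ξ,t) = ∫ f(g [u;t]) du`, `g ∈ SO(n)`,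
`g ξ₀ = ξ`. -/
theorem central_slice (k l m : ℕ) (hlm : m ≤ l)
    (f : Matrix (Fin k ⊕ Fin l) (Fin m) ℝ → ℂ) (hf : Integrable f)
    (ξ : Matrix (Fin k ⊕ Fin l) (Fin l) ℝ) (hξ : ξᵀ * ξ = 1)
    (g : Matrix (Fin k ⊕ Fin l) (Fin k ⊕ Fin l) ℝ)
    (hg : gᵀ * g = 1) (hgdet : g.det = 1) (hgξ : g * xi0 k l = ξ)
    (b : Matrix (Fin l) (Fin m) ℝ) (y : Matrix (Fin k ⊕ Fin l) (Fin m) ℝ)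
    (hy : y = ξ * b) :
    (∫ x : Matrix (Fin k ⊕ Fin l) (Fin m) ℝ,
        Complex.exp (Complex.I * ((yᵀ * x).trace : ℂ)) * f x) =
      ∫ t : Matrix (Fin l) (Fin m) ℝ,
        Complex.exp (Complex.I * ((bᵀ * t).trace : ℂ)) *
          ∫ u : Matrix (Fin k) (Fin m) ℝ, f (g * Matrix.fromRows u t) :=
  central_slice_general k l m f hf ξ g hg hgξ b y hy
end
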